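/- Let N(X) = tr_E[V X V*] be a completely positive unital map B(H) → B(K) with V*V invertible (N faithful), and write the polar decomposition V = (VV*)^{1/2} W with W : H → K ⊗ H_E an isometry. If X = X* satisfies N(X^2) = N(X)^2, then X = W*(N(X) ⊗ I_E) W. -/

import Mathlib

open Matrix BigOperators
open scoped Kronecker ComplexOrder

noncomputable section

namespace BSQMC

set_option linter.unusedSectionVars false

variable {H K E : Type*} [Fintype H] [DecidableEq H] [Fintype K] [DecidableEq K]
  [Fintype E] [DecidableEq E]

/-- Partial trace over the environment `E`. -/
def ptE (M : Matrix (K × E) (K × E) ℂ) : Matrix K K ℂ :=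
  Matrix.of fun k k' => ∑ e : E, M (k, e) (k', e)

/-- The map `N(X) = tr_E [V X V*]`. -/
def Nmap (V : Matrix (K × E) H ℂ) (X : Matrix H H ℂ) : Matrix K K ℂ :=
  ptE (V * X * Vᴴ)

/-- The square root of a positive semidefinite matrix, as `Matrix.PosSemidef.sqrt` was
defined in older Mathlib. -/
def psdSqrt {n : Type*} [Fintype n] [DecidableEq n] {A : Matrix n n ℂ} (hA : A.PosSemidef) :
    Matrix n n ℂ :=
  (hA.1.eigenvectorUnitary : Matrix n n ℂ) * diagonal ((↑) ∘ Real.sqrt ∘ hA.1.eigenvalues) *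
    (star (hA.1.eigenvectorUnitary : Matrix n n ℂ))

lemma psdSqrt_posSemidef {n : Type*} [Fintype n] [DecidableEq n] {A : Matrix n n ℂ}
    (hA : A.PosSemidef) : (psdSqrt hA).PosSemidef := by
  unfold psdSqrt
  have hd : (diagonal ((↑) ∘ Real.sqrt ∘ hA.1.eigenvalues) : Matrix n n ℂ).PosSemidef :=
    PosSemidef.diagonal (fun i => Complex.zero_le_real.mpr (Real.sqrt_nonneg _))
  simpa [star_eq_conjTranspose] using
    hd.mul_mul_conjTranspose_same (hA.1.eigenvectorUnitary : Matrix n n ℂ)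

lemma psdSqrt_mul_self {n : Type*} [Fintype n] [DecidableEq n] {A : Matrix n n ℂ}
    (hA : A.PosSemidef) : psdSqrt hA * psdSqrt hA = A := by
  unfold psdSqrt
  have hu : star (hA.1.eigenvectorUnitary : Matrix n n ℂ) * (hA.1.eigenvectorUnitary : Matrix n n ℂ)
      = 1 := Unitary.coe_star_mul_self _
  conv_rhs => rw [hA.1.spectral_theorem, Unitary.conjStarAlgAut_apply]
  simp only [Matrix.mul_assoc]
  rw [← Matrix.mul_assoc (star _) _ _, hu, Matrix.one_mul, ← Matrix.mul_assoc (diagonal _) _ _,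
    diagonal_mul_diagonal]
  congr 3
  funext i
  simp only [Function.comp_apply]
  rw [← Complex.ofReal_mul, Real.mul_self_sqrt (hA.eigenvalues_nonneg i)]
  rfl

lemma ptE_sub (M N : Matrix (K × E) (K × E) ℂ) : ptE (M - N) = ptE M - ptE N := by
  ext k k'
  simp [ptE, Finset.sum_sub_distrib]

lemma ptE_conjT (M : Matrix (K × E) (K × E) ℂ) : ptE Mᴴ = (ptE M)ᴴ := by
  ext k k'
  simp [ptE, Matrix.conjTranspose_apply]

lemma trace_ptE (M : Matrix (K × E) (K × E) ℂ) : (ptE M).trace = M.trace := by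
  simp [ptE, Matrix.trace, Matrix.diag, Fintype.sum_prod_type]

lemma kron_one_conjT (B : Matrix K K ℂ) :
    (B ⊗ₖ (1 : Matrix E E ℂ))ᴴ = Bᴴ ⊗ₖ (1 : Matrix E E ℂ) := by
  ext ⟨k, e⟩ ⟨k', e'⟩
  simp only [Matrix.conjTranspose_apply, Matrix.kronecker_apply, Matrix.one_apply]
  by_cases h : e = e'
  · subst h; simp
  · rw [if_neg (fun h' => h h'.symm), if_neg h]
    simp

lemma ptE_kron_mul (B : Matrix K K ℂ) (M : Matrix (K × E) (K × E) ℂ) :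
    ptE ((B ⊗ₖ (1 : Matrix E E ℂ)) * M) = B * ptE M := by
  ext k k'
  simp only [ptE, Matrix.mul_apply, Matrix.of_apply, Matrix.kronecker_apply,
    Fintype.sum_prod_type, Matrix.one_apply]
  rw [Finset.sum_comm]
  congr 1
  ext j
  rw [Finset.sum_comm]
  simp [Finset.mul_sum, mul_ite, ite_mul]

lemma ptE_mul_kron (M : Matrix (K × E) (K × E) ℂ) (B : Matrix K K ℂ) :
    ptE (M * (B ⊗ₖ (1 : Matrix E E ℂ))) = ptE M * B := by
  ext k k'
  simp only [ptE, Matrix.mul_apply, Matrix.of_apply, Matrix.kronecker_apply,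
    Fintype.sum_prod_type, Matrix.one_apply]
  rw [Finset.sum_comm]
  congr 1
  ext j
  simp [Finset.sum_mul, mul_ite, ite_mul, Finset.sum_comm (γ := E)]

lemma trace_conjT_mul_self_eq_zero {m n : Type*} [Fintype m] [Fintype n]
    (B : Matrix m n ℂ) (h : (Bᴴ * B).trace = 0) : B = 0 := by
  have h1 : ((∑ j : n, ∑ i : m, Complex.normSq (B i j) : ℝ) : ℂ) = 0 := by
    rw [← h]
    simp only [Matrix.trace, Matrix.diag, Matrix.mul_apply, Matrix.conjTranspose_apply]
    push_cast
    congr 1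
    ext j
    congr 1
    ext i
    rw [Complex.normSq_eq_conj_mul_self]
    rfl
  have h2 : (∑ j : n, ∑ i : m, Complex.normSq (B i j) : ℝ) = 0 := by
    exact_mod_cast h1
  ext i j
  have h3 : ∀ j ∈ Finset.univ, (0:ℝ) ≤ ∑ i : m, Complex.normSq (B i j) :=
    fun j _ => Finset.sum_nonneg fun i _ => Complex.normSq_nonneg _
  have h4 := (Finset.sum_eq_zero_iff_of_nonneg h3).mp h2 j (Finset.mem_univ j)
  have h5 := (Finset.sum_eq_zero_iff_of_nonneg
    (fun i _ => Complex.normSq_nonneg (B i j))).mp h4 i (Finset.mem_univ i)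
  simpa using Complex.normSq_eq_zero.mp h5

lemma psd_trace_zero {n : Type*} [Fintype n] [DecidableEq n] {A : Matrix n n ℂ}
    (hA : A.PosSemidef) (h : A.trace = 0) : A = 0 := by
  have hs : psdSqrt hA = 0 := by
    apply trace_conjT_mul_self_eq_zero
    rw [(psdSqrt_posSemidef hA).isHermitian.eq, psdSqrt_mul_self hA, h]
  rw [← psdSqrt_mul_self hA, hs, mul_zero]

theorem multiplicative_implies_compression
    (V : Matrix (K × E) H ℂ)
    (hunital : ptE (V * Vᴴ) = 1)
    (hfaith : IsUnit (Vᴴ * V))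
    (W : Matrix (K × E) H ℂ)
    (hWiso : Wᴴ * W = 1)
    (hpolar : V = psdSqrt (Matrix.posSemidef_self_mul_conjTranspose V) * W)
    (X : Matrix H H ℂ) (hX : Xᴴ = X)
    (hmul : Nmap V (X * X) = Nmap V X * Nmap V X) :
    X = Wᴴ * (Nmap V X ⊗ₖ (1 : Matrix E E ℂ)) * W := by
  set B := Nmap V X with hBdef
  -- B is hermitian
  have hVXVH : (V * X * Vᴴ)ᴴ = V * X * Vᴴ := by
    rw [Matrix.conjTranspose_mul, Matrix.conjTranspose_mul, Matrix.conjTranspose_conjTranspose,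
      hX, Matrix.mul_assoc]
  have hBH : Bᴴ = B := by
    rw [hBdef, Nmap, ← ptE_conjT, hVXVH]
  -- Step 1: (B ⊗ 1) * V = V * X
  set D := (B ⊗ₖ (1 : Matrix E E ℂ)) * V - V * X with hDdef
  have hDH : Dᴴ = Vᴴ * (Bᴴ ⊗ₖ (1 : Matrix E E ℂ)) - Xᴴ * Vᴴ := by
    rw [hDdef, Matrix.conjTranspose_sub, Matrix.conjTranspose_mul, Matrix.conjTranspose_mul,
      kron_one_conjT]
  have hexp : D * Dᴴ =
      ((B ⊗ₖ (1 : Matrix E E ℂ)) * ((V * Vᴴ) * (Bᴴ ⊗ₖ (1 : Matrix E E ℂ)))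
        - (B ⊗ₖ (1 : Matrix E E ℂ)) * (V * Xᴴ * Vᴴ))
        - ((V * X * Vᴴ) * (Bᴴ ⊗ₖ (1 : Matrix E E ℂ)) - V * (X * Xᴴ) * Vᴴ) := by
    rw [hDdef, hDH]
    rw [Matrix.sub_mul, Matrix.mul_sub, Matrix.mul_sub]
    simp only [Matrix.mul_assoc]
  have hptE0 : ptE (D * Dᴴ) = 0 := by
    rw [hexp]
    simp only [ptE_sub, ptE_kron_mul, ptE_mul_kron]
    rw [hunital, hX]
    have e4 : ptE (V * (X * X) * Vᴴ) = B * B := hmul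
    have e1 : ptE (V * X * Vᴴ) = B := rfl
    rw [e4, e1, hBH]
    simp
  have hD0 : D = 0 := by
    have htr : ((Dᴴ)ᴴ * Dᴴ).trace = 0 := by
      rw [Matrix.conjTranspose_conjTranspose, ← trace_ptE, hptE0, Matrix.trace_zero]
    have h := trace_conjT_mul_self_eq_zero Dᴴ htr
    calc D = (Dᴴ)ᴴ := (Matrix.conjTranspose_conjTranspose D).symm
    _ = 0 := by rw [h, Matrix.conjTranspose_zero]
  have hBV : (B ⊗ₖ (1 : Matrix E E ℂ)) * V = V * X := by
    have h : (B ⊗ₖ (1 : Matrix E E ℂ)) * V - V * X = 0 := by rw [← hDdef]; exact hD0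
    exact sub_eq_zero.mp h
  -- Step 2: structure of the polar decomposition
  set S := psdSqrt (Matrix.posSemidef_self_mul_conjTranspose V) with hSdef
  have hSpsd : S.PosSemidef := psdSqrt_posSemidef (Matrix.posSemidef_self_mul_conjTranspose V)
  have hSH : Sᴴ = S := hSpsd.isHermitian.eq
  have hS2 : S * S = V * Vᴴ := psdSqrt_mul_self (Matrix.posSemidef_self_mul_conjTranspose V)
  have hSWV : S * W = V := hpolar.symm
  set P := W * Wᴴ with hPdef
  have hPH : Pᴴ = P := by
    rw [hPdef, Matrix.conjTranspose_mul, Matrix.conjTranspose_conjTranspose]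
  have hPP : P * P = P := by
    rw [hPdef, Matrix.mul_assoc W Wᴴ (W * Wᴴ), ← Matrix.mul_assoc Wᴴ W Wᴴ, hWiso,
      Matrix.one_mul]
  have hWSV : Wᴴ * S = Vᴴ := by
    rw [← hSWV, Matrix.conjTranspose_mul, hSH]
  have hSPS : S * P * S = V * Vᴴ := by
    calc S * P * S = S * W * (Wᴴ * S) := by
          rw [hPdef, ← Matrix.mul_assoc S W Wᴴ, Matrix.mul_assoc (S * W) Wᴴ S]
    _ = V * Vᴴ := by rw [hSWV, hWSV]
  -- P * S = S
  have hWWS : P * S = S := by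
    set R := S - P * S with hRdef
    have hRH : Rᴴ = S - S * P := by
      rw [hRdef, Matrix.conjTranspose_sub, Matrix.conjTranspose_mul, hPH, hSH]
    have hRR : Rᴴ * R = 0 := by
      rw [hRH, hRdef]
      have expand : (S - S * P) * (S - P * S)
          = (S * S - S * (P * S)) - (S * P * S - S * P * (P * S)) := by
        rw [Matrix.sub_mul, Matrix.mul_sub, Matrix.mul_sub]
      rw [expand, ← Matrix.mul_assoc (S * P) P S, Matrix.mul_assoc S P P, hPP,
        ← Matrix.mul_assoc S P S, hSPS, hS2]
      simp
    have h0 : S - P * S = 0 := Matrix.conjTranspose_mul_self_eq_zero.mp hRR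
    have := sub_eq_zero.mp h0
    exact this.symm
  set T := Wᴴ * S * W with hTdef
  have hTH : Tᴴ = T := by
    rw [hTdef, Matrix.conjTranspose_mul, Matrix.conjTranspose_mul,
      Matrix.conjTranspose_conjTranspose, hSH, Matrix.mul_assoc]
  have hWT : W * T = V := by
    rw [hTdef, ← Matrix.mul_assoc W (Wᴴ * S) W, ← Matrix.mul_assoc W Wᴴ S, ← hPdef, hWWS, hSWV]
  have hWV : Wᴴ * V = T := by
    rw [← hSWV, hTdef, Matrix.mul_assoc]
  have hVW : Vᴴ * W = T := by rw [hTdef, ← hWSV]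
  have hPV : P * V = V := by rw [← hSWV, ← Matrix.mul_assoc, hWWS]
  have hTT : T * T = Vᴴ * V := by
    have h1 : T * T = (Vᴴ * W) * (Wᴴ * V) := by rw [hVW, hWV]
    rw [h1, Matrix.mul_assoc Vᴴ W (Wᴴ * V), ← Matrix.mul_assoc W Wᴴ V, ← hPdef, hPV]
  have hTdet : IsUnit T.det := by
    have h1 : IsUnit (Vᴴ * V).det := (Matrix.isUnit_iff_isUnit_det _).mp hfaith
    rw [← hTT, Matrix.det_mul] at h1
    exact isUnit_of_mul_isUnit_left h1
  -- Step 3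
  set Y := Wᴴ * (B ⊗ₖ (1 : Matrix E E ℂ)) * W with hYdef
  have hYH : Yᴴ = Y := by
    rw [hYdef, Matrix.conjTranspose_mul, Matrix.conjTranspose_mul,
      Matrix.conjTranspose_conjTranspose, kron_one_conjT, hBH, Matrix.mul_assoc]
  have hYT : Y * T = T * X := by
    calc Y * T = Wᴴ * (B ⊗ₖ (1 : Matrix E E ℂ)) * (W * T) := by
          rw [hYdef, Matrix.mul_assoc (Wᴴ * (B ⊗ₖ (1 : Matrix E E ℂ))) W T]
    _ = Wᴴ * ((B ⊗ₖ (1 : Matrix E E ℂ)) * V) := by rw [hWT, Matrix.mul_assoc]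
    _ = (Wᴴ * V) * X := by rw [hBV, Matrix.mul_assoc]
    _ = T * X := by rw [hWV]
  have hTY : T * Y = X * T := by
    have h := congrArg Matrix.conjTranspose hYT
    rw [Matrix.conjTranspose_mul Y T, Matrix.conjTranspose_mul T X, hYH, hTH, hX] at h
    exact h
  -- Step 4
  set C := Y - X with hCdef
  have hCH : Cᴴ = C := by
    rw [hCdef, Matrix.conjTranspose_sub, hYH, hX]
  have hTC : T * C = -(C * T) := by
    rw [hCdef, Matrix.mul_sub, Matrix.sub_mul, hTY, hYT]
    abel
  have htrace : (T * (C * C)).trace = 0 := by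
    have h1 : (T * (C * C)).trace = ((T * C) * C).trace := by rw [Matrix.mul_assoc T C C]
    have h2 : ((T * C) * C).trace = (C * (T * C)).trace := Matrix.trace_mul_comm _ _
    have h3 : (C * (T * C)).trace = -((C * C) * T).trace := by
      rw [hTC, Matrix.mul_neg, Matrix.trace_neg, ← Matrix.mul_assoc]
    have h4 : ((C * C) * T).trace = (T * (C * C)).trace := Matrix.trace_mul_comm _ _
    have h5 := h1.trans (h2.trans h3)
    rw [h4] at h5
    linear_combination h5 / 2
  have hTpsd : T.PosSemidef := hSpsd.conjTranspose_mul_mul_same W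
  have hCTCtr : (Cᴴ * T * C).trace = 0 := by
    rw [hCH]
    calc (C * T * C).trace = (C * (C * T)).trace := Matrix.trace_mul_comm _ _
    _ = (T * (C * C)).trace := by rw [← Matrix.mul_assoc]; exact Matrix.trace_mul_comm _ _
    _ = 0 := htrace
  have hCTC : Cᴴ * T * C = 0 := psd_trace_zero (hTpsd.conjTranspose_mul_mul_same C) hCTCtr
  set R2 := psdSqrt hTpsd with hR2def
  have hR2H : R2ᴴ = R2 := (psdSqrt_posSemidef hTpsd).isHermitian.eq
  have hR2C : R2 * C = 0 := by
    apply Matrix.conjTranspose_mul_self_eq_zero.mp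
    rw [Matrix.conjTranspose_mul, hR2H, Matrix.mul_assoc Cᴴ R2 (R2 * C),
      ← Matrix.mul_assoc R2 R2 C, psdSqrt_mul_self hTpsd, ← Matrix.mul_assoc, hCTC]
  have hTC0 : T * C = 0 := by
    rw [← psdSqrt_mul_self hTpsd, Matrix.mul_assoc, hR2C, Matrix.mul_zero]
  have hC0 : C = 0 := by
    calc C = T⁻¹ * (T * C) := by
          rw [← Matrix.mul_assoc, Matrix.nonsing_inv_mul T hTdet, Matrix.one_mul]
    _ = 0 := by rw [hTC0, Matrix.mul_zero]
  have h := sub_eq_zero.mp (by rw [← hCdef]; exact hC0 : Y - X = 0)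
  exact h.symm

end BSQMC
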